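/- Fix positive integers m, n and real M with 0 < M ≤ m·n and 4M ≤ (m+n)². Define l_SVD = M/(m+n+1) and l_ESVD = ((m+n) − sqrt((m+n)² − 4M))/2. Then l_ESVD > l_SVD. -/

import Mathlib

/-! With `s = m + n`, the ESVD rank `(s - √(s² - 4M))/2` is the smaller root of `(s - l) l = M`,
and `l ↦ (s - l) l` is increasing on `l ≤ s/2`. The SVD rank `l = M/(s + 1)` lies below `s/2` and
satisfies `(s - l) l < (s + 1) l = M`, so it lies strictly below that root. -/

theorem lt_sub_sqrt_div_two_of_mul_lt {s M x : ℝ} (hD : 4 * M ≤ s ^ 2) (hx : x ≤ s / 2)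
    (h : (s - x) * x < M) : x < (s - √(s ^ 2 - 4 * M)) / 2 := by
  set r := (s - √(s ^ 2 - 4 * M)) / 2
  have hr_root : (s - r) * r = M := by
    have hsq := Real.sq_sqrt (sub_nonneg.mpr hD)
    simp only [r]
    linear_combination -hsq / 4
  have hr_le : r ≤ s / 2 := by
    have := Real.sqrt_nonneg (s ^ 2 - 4 * M)
    simp only [r]
    linarith
  by_contra! hrx
  -- `(s - x) x - (s - r) r = (x - r)(s - x - r)`, a product of two nonnegative factors
  nlinarith [mul_nonneg (sub_nonneg.mpr hrx) (by linarith : (0 : ℝ) ≤ s - x - r)]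

theorem sub_div_add_one_mul_div_add_one_lt {s M : ℝ} (hs : 0 ≤ s) (hM : 0 < M) :
    (s - M / (s + 1)) * (M / (s + 1)) < M := by
  have hl : 0 < M / (s + 1) := by positivity
  have hM_eq : M = (s + 1) * (M / (s + 1)) := by field_simp
  nlinarith

theorem div_add_one_le_half {s M : ℝ} (hs : 0 ≤ s) (hD : 4 * M ≤ s ^ 2) :
    M / (s + 1) ≤ s / 2 := by
  rw [div_le_iff₀ (by positivity)]
  nlinarith

theorem stmt12_general (m n : ℕ) (M : ℝ)
    (hM0 : 0 < M)
    (hM4 : 4 * M ≤ ((m : ℝ) + n) ^ 2) :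
    M / ((m : ℝ) + n + 1) <
      (((m : ℝ) + n) - Real.sqrt (((m : ℝ) + n) ^ 2 - 4 * M)) / 2 := by
  have hs : (0 : ℝ) ≤ m + n := by positivity
  exact lt_sub_sqrt_div_two_of_mul_lt hM4 (div_add_one_le_half hs hM4)
    (sub_div_add_one_mul_div_add_one_lt hs hM0)

theorem stmt12 (m n : ℕ) (hm : 0 < m) (hn : 0 < n) (M : ℝ)
    (hM0 : 0 < M) (hMmn : M ≤ (m : ℝ) * n)
    (hM4 : 4 * M ≤ ((m : ℝ) + n) ^ 2) :
    M / ((m : ℝ) + n + 1) <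
      (((m : ℝ) + n) - Real.sqrt (((m : ℝ) + n) ^ 2 - 4 * M)) / 2 :=
  stmt12_general m n M hM0 hM4
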